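/- arXiv:2512.21935 — 2 statements merged into one kernel-verified Lean document; each statement's English description precedes it below -/
import Mathlib

section
/- Let ≤ be a rooted tree order on a finite vertex set V, and let G be its comparability graph (distinct u, w adjacent iff comparable). Let θ be a second-order stationary point of the Kuramoto energy E_G. Then any two distinct leaves with the same parent synchronize: if p and q are distinct minimal elements and the least strict ancestor of p equals the least strict ancestor of q, then v_p = v_q, where v_k = (cos θ_k, sin θ_k). -/
open Finset

/-- The phasor of vertex `i` at state `θ`: the unit vector `(cos θᵢ, sin θᵢ) ∈ ℝ²`. -/
noncomputable def phasor {V : Type*} (θ : V → ℝ) (i : V) : ℝ × ℝ :=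
  (Real.cos (θ i), Real.sin (θ i))

/-- The Kuramoto energy `E_G(θ) = (1/2)·Σ_{i,j} A_{ij}(1 − cos(θ_i − θ_j))`. -/
noncomputable def kuramotoEnergy {V : Type*} [Fintype V] (G : SimpleGraph V)
    [DecidableRel G.Adj] (θ : V → ℝ) : ℝ :=
  (1 / 2) * ∑ i, ∑ j, (if G.Adj i j then (1 : ℝ) else 0) * (1 - Real.cos (θ i - θ j))

/-- The Hessian of the Kuramoto energy at `θ`: off-diagonal entries
`−A_{ij} cos(θ_i − θ_j)` and diagonal entries `Σ_{k ≠ i} A_{ik} cos(θ_i − θ_k)`. -/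
noncomputable def kuramotoHessian {V : Type*} [Fintype V] [DecidableEq V] (G : SimpleGraph V)
    [DecidableRel G.Adj] (θ : V → ℝ) : Matrix V V ℝ :=
  Matrix.of fun i j =>
    if i = j then ∑ k ∈ Finset.univ.erase i, (if G.Adj i k then Real.cos (θ i - θ k) else 0)
    else -(if G.Adj i j then Real.cos (θ i - θ j) else 0)

/-- `θ` is a second-order stationary point of the Kuramoto energy: the gradient
`(∇E_G(θ))_i = Σ_j A_{ij} sin(θ_i − θ_j)` vanishes and the Hessian is positive
semidefinite. -/
def IsSOSP {V : Type*} [Fintype V] [DecidableEq V] (G : SimpleGraph V)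
    [DecidableRel G.Adj] (θ : V → ℝ) : Prop :=
  (∀ i, ∑ j, (if G.Adj i j then (1 : ℝ) else 0) * Real.sin (θ i - θ j) = 0) ∧
  (kuramotoHessian G θ).PosSemidef

/-- The comparability graph of a partial order: distinct `u, w` are adjacent iff
`u < w` or `w < u`. -/
def comparabilityGraph (V : Type*) [PartialOrder V] : SimpleGraph V where
  Adj u w := u < w ∨ w < u
  symm := ⟨fun _ _ h => Or.symm h⟩
  loopless := ⟨fun u h => by rcases h with h | h <;> exact lt_irrefl u h⟩

instance {V : Type*} [PartialOrder V] [DecidableRel ((· < ·) : V → V → Prop)] :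
    DecidableRel (comparabilityGraph V).Adj :=
  fun u w => inferInstanceAs (Decidable (u < w ∨ w < u))

/-!
A leaf `p` with parent `r` is adjacent exactly to the chain `N = {u | r ≤ u}`. Let `Z` be the sum
of the phasors on `N`. Stationarity at `p` says that `v_p` is parallel to `Z`, and the diagonal
Hessian entry at `p` is `⟨v_p, Z⟩ ≥ 0`; so if `Z ≠ 0` then `v_p = Z / |Z|`, and likewise
`v_q = Z / |Z|`. The case `Z = 0` is excluded by testing the Hessian on the basis vector `e_r` and
on the indicator of the subtree below `r`.
-/

open Real Matrix

@[simp] lemma phasor_fst {ι : Type*} (θ : ι → ℝ) (i : ι) : (phasor θ i).1 = cos (θ i) := rfl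

@[simp] lemma phasor_snd {ι : Type*} (θ : ι → ℝ) (i : ι) : (phasor θ i).2 = sin (θ i) := rfl

lemma sum_cos_sub {ι : Type*} (s : Finset ι) (θ : ι → ℝ) (a : ℝ) :
    ∑ u ∈ s, cos (a - θ u)
      = cos a * (∑ u ∈ s, phasor θ u).1 + sin a * (∑ u ∈ s, phasor θ u).2 := by
  simp [phasor, Prod.fst_sum, Prod.snd_sum, cos_sub, sum_add_distrib, mul_sum]

lemma sum_sin_sub {ι : Type*} (s : Finset ι) (θ : ι → ℝ) (a : ℝ) :
    ∑ u ∈ s, sin (a - θ u)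
      = sin a * (∑ u ∈ s, phasor θ u).1 - cos a * (∑ u ∈ s, phasor θ u).2 := by
  simp [phasor, Prod.fst_sum, Prod.snd_sum, sin_sub, sum_sub_distrib, mul_sum]

lemma eq_smul_phasor_of_cross_eq_zero {ι : Type*} {θ : ι → ℝ} {v : ι} {Z : ℝ × ℝ}
    (h : sin (θ v) * Z.1 - cos (θ v) * Z.2 = 0) :
    Z = (cos (θ v) * Z.1 + sin (θ v) * Z.2) • phasor θ v := by
  have hv := sin_sq_add_cos_sq (θ v)
  ext
  · simp only [phasor, Prod.smul_fst, smul_eq_mul]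
    linear_combination sin (θ v) * h - Z.1 * hv
  · simp only [phasor, Prod.smul_snd, smul_eq_mul]
    linear_combination -cos (θ v) * h - Z.2 * hv

lemma phasor_eq_of_eq_smul {ι : Type*} {θ : ι → ℝ} {p q : ι} {Z : ℝ × ℝ} {a b : ℝ}
    (hZ : Z ≠ 0) (ha : 0 ≤ a) (hb : 0 ≤ b) (hp : Z = a • phasor θ p) (hq : Z = b • phasor θ q) :
    phasor θ p = phasor θ q := by
  have norm_sq : ∀ (c : ℝ) (v : ι), Z = c • phasor θ v → Z.1 ^ 2 + Z.2 ^ 2 = c ^ 2 := by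
    rintro c v rfl
    simp only [phasor, Prod.smul_fst, Prod.smul_snd, smul_eq_mul]
    linear_combination c ^ 2 * sin_sq_add_cos_sq (θ v)
  have hab : a = b := (sq_eq_sq₀ ha hb).mp ((norm_sq a p hp).symm.trans (norm_sq b q hq))
  have ha0 : a ≠ 0 := by rintro rfl; exact hZ (by simpa using hp)
  subst hab
  exact smul_right_injective _ ha0 (hp.symm.trans hq)

section Kuramoto

variable {V : Type*} [Fintype V] [DecidableEq V] {G : SimpleGraph V} [DecidableRel G.Adj]
  {θ : V → ℝ}

lemma kuramotoHessian_apply_self (i : V) :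
    kuramotoHessian G θ i i = ∑ j, if G.Adj i j then cos (θ i - θ j) else 0 := by
  simp [kuramotoHessian]

lemma kuramotoHessian_apply_of_ne {i j : V} (h : i ≠ j) :
    kuramotoHessian G θ i j = -(if G.Adj i j then cos (θ i - θ j) else 0) := by
  simp [kuramotoHessian, h]

lemma sum_kuramotoHessian_row (i : V) : ∑ j, kuramotoHessian G θ i j = 0 := by
  rw [← add_sum_erase _ _ (mem_univ i), sum_congr rfl fun j hj =>
    kuramotoHessian_apply_of_ne (Ne.symm (ne_of_mem_erase hj))]
  simp [kuramotoHessian]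

lemma kuramotoHessian_quadForm_indicator (S : Finset V) :
    (fun v => if v ∈ S then (1 : ℝ) else 0) ⬝ᵥ
        (kuramotoHessian G θ *ᵥ fun v => if v ∈ S then (1 : ℝ) else 0)
      = ∑ i ∈ S, ∑ j ∈ Sᶜ, if G.Adj i j then cos (θ i - θ j) else 0 := by
  have row : ∀ i ∈ S, ∑ j ∈ S, kuramotoHessian G θ i j
      = ∑ j ∈ Sᶜ, if G.Adj i j then cos (θ i - θ j) else 0 := by
    intro i hi
    rw [← add_left_inj (∑ j ∈ Sᶜ, kuramotoHessian G θ i j), add_comm, sum_compl_add_sum,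
      sum_kuramotoHessian_row, ← sum_add_distrib]
    refine (sum_eq_zero fun j hj => ?_).symm
    rw [kuramotoHessian_apply_of_ne (by rintro rfl; exact mem_compl.mp hj hi), add_neg_cancel]
  simp only [dotProduct, mulVec, mul_ite, mul_one, mul_zero, ite_mul, one_mul, zero_mul]
  rw [← sum_filter, filter_mem_eq_inter, univ_inter]
  refine sum_congr rfl fun i hi => ?_
  rw [← row i hi, ← sum_filter, filter_mem_eq_inter, univ_inter]

lemma sum_ite_adj_eq_sum {v : V} {N : Finset V} (hv : ∀ j, G.Adj v j ↔ j ∈ N) (f : V → ℝ) :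
    ∑ j, (if G.Adj v j then f j else 0) = ∑ j ∈ N, f j := by
  simp_rw [hv]
  rw [sum_ite_mem, univ_inter]

namespace IsSOSP

lemma cross_sum_phasor_eq_zero (hθ : IsSOSP G θ) {v : V} {N : Finset V}
    (hv : ∀ j, G.Adj v j ↔ j ∈ N) :
    sin (θ v) * (∑ u ∈ N, phasor θ u).1 - cos (θ v) * (∑ u ∈ N, phasor θ u).2 = 0 := by
  have hgrad := hθ.1 v
  simp_rw [boole_mul] at hgrad
  rwa [← sum_sin_sub, ← sum_ite_adj_eq_sum hv]

lemma dot_sum_phasor_nonneg (hθ : IsSOSP G θ) {v : V} {N : Finset V}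
    (hv : ∀ j, G.Adj v j ↔ j ∈ N) :
    0 ≤ cos (θ v) * (∑ u ∈ N, phasor θ u).1 + sin (θ v) * (∑ u ∈ N, phasor θ u).2 := by
  rw [← sum_cos_sub, ← sum_ite_adj_eq_sum hv, ← kuramotoHessian_apply_self]
  exact hθ.2.diag_nonneg

lemma phasor_eq_of_adj_iff (hθ : IsSOSP G θ) {p q : V} {N : Finset V}
    (hp : ∀ j, G.Adj p j ↔ j ∈ N) (hq : ∀ j, G.Adj q j ↔ j ∈ N)
    (hN : ∑ u ∈ N, phasor θ u ≠ 0) : phasor θ p = phasor θ q :=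
  phasor_eq_of_eq_smul hN (hθ.dot_sum_phasor_nonneg hp) (hθ.dot_sum_phasor_nonneg hq)
    (eq_smul_phasor_of_cross_eq_zero (hθ.cross_sum_phasor_eq_zero hp))
    (eq_smul_phasor_of_cross_eq_zero (hθ.cross_sum_phasor_eq_zero hq))

end IsSOSP

end Kuramoto

section TreeOrder

variable {V : Type*} [PartialOrder V]

lemma comparabilityGraph_adj_iff_of_isMin {p r : V} (hp : IsMin p) (hpr : p < r)
    (hr : ∀ u, p < u → r ≤ u) (j : V) :
    (comparabilityGraph V).Adj p j ↔ r ≤ j := by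
  refine ⟨?_, fun h => Or.inl (hpr.trans_le h)⟩
  rintro (h | h)
  · exact hr j h
  · exact absurd h hp.not_lt

lemma comparabilityGraph_adj_iff_of_le_of_not_le
    (hchain : ∀ v : V, IsChain (· ≤ ·) {u : V | v < u}) {i j r : V} (hi : i ≤ r)
    (hj : ¬ j ≤ r) : (comparabilityGraph V).Adj i j ↔ r < j := by
  refine ⟨?_, fun h => Or.inl (hi.trans_lt h)⟩
  rintro (h | h)
  · obtain rfl | hir := hi.eq_or_lt
    · exact h
    · have hjr : j ≠ r := by rintro rfl; exact hj le_rfl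
      exact ((hchain i h hir hjr).resolve_left hj).lt_of_ne' hjr
  · exact absurd (h.le.trans hi) hj

variable [Fintype V] [DecidableEq V] [DecidableRel ((· < ·) : V → V → Prop)] [DecidableLE V]
  {θ : V → ℝ}

lemma IsSOSP.two_le_sum_cos_sub_of_sum_phasor_gt (hθ : IsSOSP (comparabilityGraph V) θ) {r : V}
    (hS : ∑ u ∈ univ.filter (r < ·), phasor θ u = -phasor θ r) :
    2 ≤ ∑ i ∈ univ.filter (· ≤ r), cos (θ r - θ i) := by
  set S := univ.filter (r < ·)
  set T := univ.filter (· ≤ r)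
  have hN : ∀ j, (comparabilityGraph V).Adj r j ↔ j ∈ S ∪ T.erase r := by
    intro j
    simp only [S, T, mem_union, mem_filter, mem_univ, true_and, mem_erase, comparabilityGraph]
    constructor
    · rintro (h | h)
      · exact Or.inl h
      · exact Or.inr ⟨h.ne, h.le⟩
    · rintro (h | ⟨hne, hle⟩)
      · exact Or.inl h
      · exact Or.inr (hle.lt_of_ne hne)
  have hdisj : Disjoint S (T.erase r) := by
    refine disjoint_left.mpr fun j hjS hjT => ?_
    simp only [S, T, mem_filter, mem_univ, true_and, mem_erase] at hjS hjT
    exact hjS.not_ge hjT.2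
  have h := hθ.2.diag_nonneg (i := r)
  rw [kuramotoHessian_apply_self, sum_ite_adj_eq_sum hN, sum_cos_sub, sum_union hdisj, hS,
    sum_erase_eq_sub (by simp [T])] at h
  simp only [Prod.fst_add, Prod.snd_add, Prod.fst_neg, Prod.snd_neg,
    Prod.fst_sub, Prod.snd_sub, phasor_fst, phasor_snd] at h
  rw [sum_cos_sub]
  linear_combination h - 2 * sin_sq_add_cos_sq (θ r)

lemma IsSOSP.sum_cos_sub_nonpos_of_sum_phasor_gt
    (hchain : ∀ v : V, IsChain (· ≤ ·) {u : V | v < u}) (hθ : IsSOSP (comparabilityGraph V) θ)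
    {r : V} (hS : ∑ u ∈ univ.filter (r < ·), phasor θ u = -phasor θ r) :
    ∑ i ∈ univ.filter (· ≤ r), cos (θ r - θ i) ≤ 0 := by
  set S := univ.filter (r < ·)
  set T := univ.filter (· ≤ r)
  have hrow : ∀ i ∈ T, ∑ j ∈ Tᶜ, (if (comparabilityGraph V).Adj i j then cos (θ i - θ j) else 0)
      = ∑ j ∈ S, cos (θ i - θ j) := by
    intro i hi
    have hST : S ⊆ Tᶜ := fun j hj => by
      simp only [S, T, mem_filter, mem_univ, true_and, mem_compl] at hj ⊢
      exact hj.not_ge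
    rw [← inter_eq_right.mpr hST, ← sum_ite_mem]
    refine sum_congr rfl fun j hj => if_congr ?_ rfl rfl
    simp only [S, T, mem_filter, mem_univ, true_and, mem_compl] at hi hj ⊢
    exact comparabilityGraph_adj_iff_of_le_of_not_le hchain hi hj
  have h := hθ.2.dotProduct_mulVec_nonneg fun v => if v ∈ T then 1 else 0
  rw [star_trivial, kuramotoHessian_quadForm_indicator, sum_congr rfl hrow] at h
  simp_rw [sum_cos_sub, hS, Prod.fst_neg, Prod.snd_neg, phasor_fst, phasor_snd] at h
  have hcut : ∑ i ∈ T, (cos (θ i) * -cos (θ r) + sin (θ i) * -sin (θ r))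
      = -∑ i ∈ T, cos (θ r - θ i) := by
    simp only [cos_sub, ← sum_neg_distrib]
    exact sum_congr rfl fun i _ => by ring
  linarith

/-- If the phasors on `{u | r ≤ u}` cancelled, the Hessian entry at `r` would be
`∑_{i ≤ r} cos (θ r - θ i) - 2`, while its value on the indicator of `{i | i ≤ r}` would be
`-∑_{i ≤ r} cos (θ r - θ i)`; both cannot be nonnegative. -/
lemma IsSOSP.sum_phasor_filter_le_ne_zero (hchain : ∀ v : V, IsChain (· ≤ ·) {u : V | v < u})
    (hθ : IsSOSP (comparabilityGraph V) θ) (r : V) :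
    ∑ u ∈ univ.filter (r ≤ ·), phasor θ u ≠ 0 := by
  intro hZ
  have hS : ∑ u ∈ univ.filter (r < ·), phasor θ u = -phasor θ r := by
    have hsplit : univ.filter (r ≤ ·) = insert r (univ.filter (r < ·)) := by
      ext u; simp [le_iff_eq_or_lt, eq_comm]
    rw [hsplit, sum_insert (by simp)] at hZ
    exact eq_neg_of_add_eq_zero_right hZ
  linarith [hθ.two_le_sum_cos_sub_of_sum_phasor_gt hS,
    hθ.sum_cos_sub_nonpos_of_sum_phasor_gt hchain hS]

end TreeOrder

theorem stmt_12_general {V : Type*} [Fintype V] [DecidableEq V] [PartialOrder V]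
    [DecidableRel ((· < ·) : V → V → Prop)]
    (hchain : ∀ v : V, IsChain (· ≤ ·) {u : V | v < u})
    (θ : V → ℝ) (hθ : IsSOSP (comparabilityGraph V) θ)
    (p q : V) (hp : IsMin p) (hq : IsMin q)
    (r : V) (hrp : p < r) (hrq : q < r)
    (hrp_least : ∀ u : V, p < u → r ≤ u) (hrq_least : ∀ u : V, q < u → r ≤ u) :
    phasor θ p = phasor θ q := by
  classical
  have hN : ∀ v, IsMin v → v < r → (∀ u, v < u → r ≤ u) →
      ∀ j, (comparabilityGraph V).Adj v j ↔ j ∈ univ.filter (r ≤ ·) := fun v hv hvr hr j => by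
    rw [comparabilityGraph_adj_iff_of_isMin hv hvr hr, mem_filter, and_iff_right (mem_univ j)]
  exact hθ.phasor_eq_of_adj_iff (hN p hp hrp hrp_least) (hN q hq hrq hrq_least)
    (hθ.sum_phasor_filter_le_ne_zero hchain r)

/-- On the comparability graph of a rooted tree order, at a second-order stationary
point `θ` of the Kuramoto energy, any two distinct leaves (minimal elements) with the
same parent (the same least strict ancestor `r`) synchronize: `v_p = v_q`. -/
theorem stmt_12 {V : Type*} [Fintype V] [DecidableEq V] [PartialOrder V]
    [DecidableRel ((· < ·) : V → V → Prop)]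
    (hroot : ∃ r : V, ∀ v : V, v ≤ r)
    (hchain : ∀ v : V, IsChain (· ≤ ·) {u : V | v < u})
    (θ : V → ℝ) (hθ : IsSOSP (comparabilityGraph V) θ)
    (p q : V) (hpq : p ≠ q) (hp : IsMin p) (hq : IsMin q)
    (r : V) (hrp : p < r) (hrq : q < r)
    (hrp_least : ∀ u : V, p < u → r ≤ u) (hrq_least : ∀ u : V, q < u → r ≤ u) :
    phasor θ p = phasor θ q :=
  stmt_12_general hchain θ hθ p q hp hq r hrp hrq hrp_least hrq_least
end

section
/- (Propagation of the leaf-like property.) Let ≤ be a rooted tree order on a finite vertex set V, and let G be its comparability graph (distinct u, w adjacent iff comparable). Let θ be a second-order stationary point of the Kuramoto energy E_G, and let A be a non-minimal vertex. Call a vertex v leaf-like at θ if v_v = v_j for every strict descendant j of v (where v_k = (cos θ_k, sin θ_k)); in particular every leaf is leaf-like. If every child of A (every maximal element among the strict descendants of A) is leaf-like at θ, then A is leaf-like at θ, i.e., v_A = v_j for every strict descendant j of A. -/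
open Finset

/-- A vertex `v` is leaf-like at state `θ` if its phasor agrees with the phasor of every
strict descendant of `v`. -/
def LeafLike {V : Type*} [PartialOrder V] (θ : V → ℝ) (v : V) : Prop :=
  ∀ j : V, j < v → phasor θ j = phasor θ v

/-!
Testing the positive semidefinite Hessian on the indicator vector of the down-set of a vertex `B`
of a tree order shows that the cosine weight between the descendants-or-self of `B` and the
ancestors of `B` is nonnegative. Let `R` be the sum of the phasors of `A` and its ancestors. At a
leaf-like child `c` of `A` the whole subtree of `c` shares the phasor of `c`, and the ancestors of
`c` are exactly the vertices counted in `R`; so stationarity at `c` makes its phasor parallel to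
`R`, and the cut below `c` makes it point along `R`. If `R = 0`, the cut below `A` and the diagonal
Hessian entry at `A` contradict each other. Otherwise every descendant of `A` has phasor
`R / |R|`, and stationarity and the diagonal Hessian entry at `A` force the phasor of `A` to be
`R / |R|` as well.
-/

open Real Matrix

section KuramotoHessian

variable {V : Type*} [Fintype V] [DecidableEq V] {G : SimpleGraph V} [DecidableRel G.Adj]
  {θ : V → ℝ}

lemma dotProduct_kuramotoHessian_mulVec (θ x : V → ℝ) :
    x ⬝ᵥ kuramotoHessian G θ *ᵥ x =
      ∑ i, ∑ j, (if G.Adj i j then cos (θ i - θ j) else 0) * (x i * (x i - x j)) := by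
  refine Finset.sum_congr rfl fun i _ => ?_
  rw [mulVec, dotProduct, Finset.mul_sum, ← Finset.add_sum_erase _ _ (Finset.mem_univ i),
    ← Finset.add_sum_erase _ _ (Finset.mem_univ i), if_neg (G.loopless.irrefl i), zero_mul,
    zero_add]
  simp only [kuramotoHessian, of_apply, if_true]
  rw [Finset.sum_mul, Finset.mul_sum, ← Finset.sum_add_distrib]
  refine Finset.sum_congr rfl fun j hj => ?_
  rw [if_neg (Finset.ne_of_mem_erase hj).symm]
  ring

/-- The Hessian form at the indicator vector of `s` is the cosine weight of the cut `(s, sᶜ)`. -/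
theorem IsSOSP.cut_nonneg (hθ : IsSOSP G θ) (s : Finset V) :
    0 ≤ ∑ i ∈ s, ∑ j ∈ sᶜ, if G.Adj i j then cos (θ i - θ j) else 0 := by
  have h := hθ.2.dotProduct_mulVec_nonneg fun v => if v ∈ s then 1 else 0
  rw [star_trivial, dotProduct_kuramotoHessian_mulVec] at h
  refine h.trans_eq ?_
  rw [← Finset.sum_add_sum_compl s, Finset.sum_eq_zero (s := sᶜ) fun i hi => by
    simp [Finset.mem_compl.1 hi], add_zero]
  refine Finset.sum_congr rfl fun i hi => ?_
  rw [← Finset.sum_add_sum_compl s, Finset.sum_eq_zero fun j hj => by simp [hi, hj], zero_add]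
  exact Finset.sum_congr rfl fun j hj => by simp [hi, Finset.mem_compl.1 hj]

theorem IsSOSP.sum_cos_nonneg (hθ : IsSOSP G θ) (i : V) :
    0 ≤ ∑ j, if G.Adj i j then cos (θ i - θ j) else 0 := by
  refine (hθ.cut_nonneg {i}).trans_eq ?_
  rw [Finset.sum_singleton, ← Finset.sum_compl_add_sum {i}, Finset.sum_singleton,
    if_neg (G.loopless.irrefl i), add_zero]

theorem IsSOSP.sum_sin_eq_zero (hθ : IsSOSP G θ) (i : V) :
    ∑ j, (if G.Adj i j then sin (θ i - θ j) else 0) = 0 := by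
  simpa only [ite_mul, one_mul, zero_mul] using hθ.1 i

end KuramotoHessian

section Phasor

variable {ι : Type*} {θ : ι → ℝ}

lemma phasor_eq_iff {i j : ι} :
    phasor θ i = phasor θ j ↔ cos (θ i) = cos (θ j) ∧ sin (θ i) = sin (θ j) :=
  Prod.ext_iff

lemma sum_cos_sub_eq (s : Finset ι) (t : ℝ) :
    ∑ u ∈ s, cos (t - θ u) =
      cos t * (∑ u ∈ s, phasor θ u).1 + sin t * (∑ u ∈ s, phasor θ u).2 := by
  simp only [Prod.fst_sum, Prod.snd_sum, phasor, Finset.mul_sum, ← Finset.sum_add_distrib,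
    cos_sub]

lemma sum_sin_sub_eq (s : Finset ι) (t : ℝ) :
    ∑ u ∈ s, sin (t - θ u) =
      sin t * (∑ u ∈ s, phasor θ u).1 - cos t * (∑ u ∈ s, phasor θ u).2 := by
  simp only [Prod.fst_sum, Prod.snd_sum, phasor, Finset.mul_sum, ← Finset.sum_sub_distrib,
    sin_sub]

/-- The Euclidean length on `ℝ × ℝ`, whose library norm is the sup norm. -/
noncomputable def euclLength (p : ℝ × ℝ) : ℝ := √(p.1 ^ 2 + p.2 ^ 2)

lemma euclLength_smul_phasor_eq {p : ℝ × ℝ} {v : ι}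
    (h : sin (θ v) * p.1 - cos (θ v) * p.2 = 0) (h' : 0 ≤ cos (θ v) * p.1 + sin (θ v) * p.2) :
    euclLength p • phasor θ v = p := by
  have hpyth := sin_sq_add_cos_sq (θ v)
  have hlength : euclLength p = cos (θ v) * p.1 + sin (θ v) * p.2 := by
    rw [euclLength, ← sqrt_sq h']
    congr 1
    linear_combination (-(p.1 ^ 2 + p.2 ^ 2)) * hpyth + (sin (θ v) * p.1 - cos (θ v) * p.2) * h
  rw [hlength]
  ext
  · simp only [phasor, Prod.smul_fst, smul_eq_mul]
    linear_combination p.1 * hpyth - sin (θ v) * h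
  · simp only [phasor, Prod.smul_snd, smul_eq_mul]
    linear_combination p.2 * hpyth + cos (θ v) * h

lemma smul_sum_phasor_eq {s : Finset ι} {q : ℝ} {p : ℝ × ℝ}
    (h : ∀ j ∈ s, q • phasor θ j = p) : q • ∑ j ∈ s, phasor θ j = (s.card : ℝ) • p := by
  rw [Finset.smul_sum, Finset.sum_congr rfl h, Finset.sum_const, Nat.cast_smul_eq_nsmul]

end Phasor

section TreeOrder

variable {V : Type*} [PartialOrder V]

lemma exists_child_ge [Finite V] {j A : V} (hjA : j < A) :
    ∃ c, j ≤ c ∧ c < A ∧ ∀ u, u < A → ¬ c < u := by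
  obtain ⟨c, hjc, hc⟩ := (Set.toFinite {u | u < A}).exists_le_maximal hjA
  exact ⟨c, hjc, hc.prop, fun u huA => hc.not_gt huA⟩

lemma not_le_and_comparabilityGraph_adj_iff (hchain : ∀ v : V, IsChain (· ≤ ·) {u : V | v < u})
    {i B j : V} (hiB : i ≤ B) : ¬ j ≤ B ∧ (comparabilityGraph V).Adj i j ↔ B < j := by
  refine ⟨fun ⟨hjB, hij⟩ => ?_, fun hBj => ⟨hBj.not_ge, Or.inl (hiB.trans_lt hBj)⟩⟩
  rcases hij with hij | hji
  · rcases hiB.eq_or_lt with rfl | hiB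
    · exact hij
    rcases hchain i hij hiB (fun h => hjB h.le) with h | h
    · exact absurd h hjB
    · exact h.lt_of_ne fun h => hjB h.ge
  · exact absurd (hji.le.trans hiB) hjB

variable [Fintype V] [DecidableRel ((· < ·) : V → V → Prop)]

lemma sum_ite_comparabilityGraph_adj (v : V) (f : V → ℝ) :
    ∑ j, (if (comparabilityGraph V).Adj v j then f j else 0) =
      ∑ j ∈ {j | j < v}, f j + ∑ j ∈ {j | v < j}, f j := by
  rw [Finset.sum_filter, Finset.sum_filter, ← Finset.sum_add_distrib]
  refine Finset.sum_congr rfl fun j _ => ?_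
  by_cases hjv : j < v
  · simp [comparabilityGraph, hjv, hjv.not_gt]
  · by_cases hvj : v < j <;> simp [comparabilityGraph, hjv, hvj]

variable [DecidableRel ((· ≤ ·) : V → V → Prop)]

lemma sum_filter_ge_eq_add_sum_filter_gt (A : V) (f : V → ℝ) :
    ∑ u ∈ {u | A ≤ u}, f u = f A + ∑ u ∈ {u | A < u}, f u := by
  rw [← Finset.sum_cons (s := {u | A < u}) (by simp)]
  congr 1
  ext u
  simp [le_iff_eq_or_lt, eq_comm]

lemma sum_filter_le_eq_add_sum_filter_lt (A : V) (f : V → ℝ) :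
    ∑ u ∈ {u | u ≤ A}, f u = f A + ∑ u ∈ {u | u < A}, f u := by
  rw [← Finset.sum_cons (s := {u | u < A}) (by simp)]
  congr 1
  ext u
  simp [le_iff_eq_or_lt]

lemma filter_lt_eq_filter_le_of_child (hchain : ∀ v : V, IsChain (· ≤ ·) {u : V | v < u})
    {c A : V} (hcA : c < A) (hc : ∀ u, u < A → ¬ c < u) :
    ({u | c < u} : Finset V) = ({u | A ≤ u} : Finset V) := by
  ext u
  rw [Finset.mem_filter_univ, Finset.mem_filter_univ]
  refine ⟨fun hcu => ?_, hcA.trans_le⟩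
  rcases eq_or_ne u A with rfl | huA
  · exact le_rfl
  rcases hchain c hcu hcA huA with huA' | hAu
  · exact absurd hcu (hc u (huA'.lt_of_ne huA))
  · exact hAu

end TreeOrder

section KuramotoTree

variable {V : Type*} [Fintype V] [DecidableEq V] [PartialOrder V]
  [DecidableRel ((· < ·) : V → V → Prop)] {θ : V → ℝ}

theorem IsSOSP.sum_sin_lt_add_sum_sin_gt (hθ : IsSOSP (comparabilityGraph V) θ) (v : V) :
    ∑ j ∈ {j | j < v}, sin (θ v - θ j) + ∑ j ∈ {j | v < j}, sin (θ v - θ j) = 0 := by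
  rw [← sum_ite_comparabilityGraph_adj]
  exact hθ.sum_sin_eq_zero v

theorem IsSOSP.sum_cos_lt_add_sum_cos_gt_nonneg (hθ : IsSOSP (comparabilityGraph V) θ) (v : V) :
    0 ≤ ∑ j ∈ {j | j < v}, cos (θ v - θ j) + ∑ j ∈ {j | v < j}, cos (θ v - θ j) := by
  rw [← sum_ite_comparabilityGraph_adj]
  exact hθ.sum_cos_nonneg v

variable [DecidableRel ((· ≤ ·) : V → V → Prop)]

theorem IsSOSP.sum_le_sum_gt_cos_nonneg (hchain : ∀ v : V, IsChain (· ≤ ·) {u : V | v < u})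
    (hθ : IsSOSP (comparabilityGraph V) θ) (B : V) :
    0 ≤ ∑ i ∈ {i | i ≤ B}, ∑ j ∈ {j | B < j}, cos (θ i - θ j) := by
  refine (hθ.cut_nonneg {i | i ≤ B}).trans_eq (Finset.sum_congr rfl fun i hi => ?_)
  rw [← Finset.sum_filter]
  congr 1
  ext j
  rw [Finset.mem_filter, Finset.mem_compl, Finset.mem_filter_univ, Finset.mem_filter_univ]
  exact not_le_and_comparabilityGraph_adj_iff hchain ((Finset.mem_filter_univ i).1 hi)

variable (θ) in
noncomputable def ancestorResultant (A : V) : ℝ × ℝ :=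
  ∑ u ∈ {u | A ≤ u}, phasor θ u

theorem LeafLike.euclLength_smul_phasor_eq_ancestorResultant
    (hchain : ∀ v : V, IsChain (· ≤ ·) {u : V | v < u})
    (hθ : IsSOSP (comparabilityGraph V) θ) {c A : V} (hcA : c < A)
    (hc : ∀ u, u < A → ¬ c < u) (hll : LeafLike θ c) {j : V} (hjc : j ≤ c) :
    euclLength (ancestorResultant θ A) • phasor θ j = ancestorResultant θ A := by
  have hanc := filter_lt_eq_filter_le_of_child hchain hcA hc
  have hphasor : ∀ i, i ≤ c → cos (θ i) = cos (θ c) ∧ sin (θ i) = sin (θ c) := fun i hi =>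
    phasor_eq_iff.1 (hi.eq_or_lt.elim (· ▸ rfl) (hll i))
  rw [phasor_eq_iff.2 (hphasor j hjc)]
  apply euclLength_smul_phasor_eq
  · have hbelow : ∑ k ∈ {k | k < c}, sin (θ c - θ k) = 0 := Finset.sum_eq_zero fun k hk => by
      obtain ⟨hcos, hsin⟩ := hphasor k ((Finset.mem_filter_univ k).1 hk).le
      rw [sin_sub, hcos, hsin, mul_comm, sub_self]
    have h := hθ.sum_sin_lt_add_sum_sin_gt c
    rwa [hbelow, zero_add, hanc, sum_sin_sub_eq] at h
  · have h := hθ.sum_le_sum_gt_cos_nonneg hchain c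
    rw [hanc, Finset.sum_congr rfl fun i hi => by
      rw [sum_cos_sub_eq, (hphasor i ((Finset.mem_filter_univ i).1 hi)).1,
        (hphasor i ((Finset.mem_filter_univ i).1 hi)).2], Finset.sum_const, nsmul_eq_mul] at h
    refine (mul_nonneg_iff_of_pos_left ?_).1 h
    exact_mod_cast Finset.card_pos.2 ⟨c, by simp⟩

theorem IsSOSP.euclLength_ancestorResultant_pos
    (hchain : ∀ v : V, IsChain (· ≤ ·) {u : V | v < u})
    (hθ : IsSOSP (comparabilityGraph V) θ) (A : V) : 0 < euclLength (ancestorResultant θ A) := by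
  set R := ancestorResultant θ A
  by_contra hR
  have hR0 : R.1 = 0 ∧ R.2 = 0 := by
    have := sqrt_eq_zero'.1 (le_antisymm (not_lt.1 hR) (sqrt_nonneg _))
    constructor <;> nlinarith [sq_nonneg R.1, sq_nonneg R.2]
  have habove : ∀ i, ∑ u ∈ {u | A < u}, cos (θ i - θ u) = -cos (θ i - θ A) := by
    intro i
    have h : ∑ u ∈ {u | A ≤ u}, cos (θ i - θ u) = cos (θ i) * R.1 + sin (θ i) * R.2 :=
      sum_cos_sub_eq _ _
    rw [sum_filter_ge_eq_add_sum_filter_gt, hR0.1, hR0.2] at h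
    linarith
  have hdiag := hθ.sum_cos_lt_add_sum_cos_gt_nonneg A
  have hcut := hθ.sum_le_sum_gt_cos_nonneg hchain A
  simp only [habove, Finset.sum_neg_distrib, sub_self, cos_zero] at hdiag hcut
  rw [sum_filter_le_eq_add_sum_filter_lt, sub_self, cos_zero] at hcut
  have hsymm : ∑ j ∈ {j | j < A}, cos (θ A - θ j) = ∑ j ∈ {j | j < A}, cos (θ j - θ A) :=
    Finset.sum_congr rfl fun j _ => by rw [← cos_neg, neg_sub]
  linarith

theorem IsSOSP.euclLength_smul_phasor_self (hθ : IsSOSP (comparabilityGraph V) θ) {A : V}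
    (hpos : 0 < euclLength (ancestorResultant θ A))
    (hdesc : ∀ j, j < A →
      euclLength (ancestorResultant θ A) • phasor θ j = ancestorResultant θ A) :
    euclLength (ancestorResultant θ A) • phasor θ A = ancestorResultant θ A := by
  set R := ancestorResultant θ A
  set Q := euclLength R
  set d : ℝ := (Finset.card {j | j < A} : ℝ)
  have hsum : Q • ∑ j ∈ {j | j < A}, phasor θ j = d • R :=
    smul_sum_phasor_eq fun j hj => hdesc j ((Finset.mem_filter_univ j).1 hj)
  have hsum₁ := congrArg Prod.fst hsum
  have hsum₂ := congrArg Prod.snd hsum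
  simp only [Prod.smul_fst, Prod.smul_snd, smul_eq_mul] at hsum₁ hsum₂
  have hupper (f : V → ℝ) : ∑ u ∈ {u | A < u}, f u = ∑ u ∈ {u | A ≤ u}, f u - f A := by
    rw [sum_filter_ge_eq_add_sum_filter_gt]; ring
  have hgrad := hθ.sum_sin_lt_add_sum_sin_gt A
  have hdiag := hθ.sum_cos_lt_add_sum_cos_gt_nonneg A
  have hR : ∑ u ∈ {u | A ≤ u}, phasor θ u = R := rfl
  rw [hupper, sum_sin_sub_eq, sum_sin_sub_eq, hR, sub_self, sin_zero] at hgrad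
  rw [hupper, sum_cos_sub_eq, sum_cos_sub_eq, hR, sub_self, cos_zero] at hdiag
  apply euclLength_smul_phasor_eq
  · have h : (d + Q) * (sin (θ A) * R.1 - cos (θ A) * R.2) = 0 := by
      linear_combination Q * hgrad - sin (θ A) * hsum₁ + cos (θ A) * hsum₂
    exact (mul_eq_zero.1 h).resolve_left (by positivity)
  · have h : Q ≤ (d + Q) * (cos (θ A) * R.1 + sin (θ A) * R.2) := by
      linear_combination Q * hdiag + cos (θ A) * hsum₁ + sin (θ A) * hsum₂
    exact (pos_of_mul_pos_right (hpos.trans_le h) (by positivity)).le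

end KuramotoTree

theorem stmt_13_general {V : Type*} [Fintype V] [DecidableEq V] [PartialOrder V]
    [DecidableRel ((· < ·) : V → V → Prop)]
    (hchain : ∀ v : V, IsChain (· ≤ ·) {u : V | v < u})
    (θ : V → ℝ) (hθ : IsSOSP (comparabilityGraph V) θ)
    (A : V)
    (hchildren : ∀ c : V, c < A → (∀ u : V, u < A → ¬ c < u) → LeafLike θ c) :
    LeafLike θ A := by
  classical
  have hpos := hθ.euclLength_ancestorResultant_pos hchain A
  have hdesc : ∀ j, j < A →
      euclLength (ancestorResultant θ A) • phasor θ j = ancestorResultant θ A := by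
    intro j hjA
    obtain ⟨c, hjc, hcA, hc⟩ := exists_child_ge hjA
    exact (hchildren c hcA hc).euclLength_smul_phasor_eq_ancestorResultant hchain hθ hcA hc hjc
  have hself := hθ.euclLength_smul_phasor_self hpos hdesc
  exact fun j hjA => smul_right_injective _ hpos.ne' ((hdesc j hjA).trans hself.symm)

/-- **Propagation of the leaf-like property.** On the comparability graph of a rooted
tree order, at a second-order stationary point `θ` of the Kuramoto energy: if `A` is a
non-minimal vertex all of whose children (maximal elements among the strict descendants
of `A`) are leaf-like at `θ`, then `A` is leaf-like at `θ`. -/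
theorem stmt_13 {V : Type*} [Fintype V] [DecidableEq V] [PartialOrder V]
    [DecidableRel ((· < ·) : V → V → Prop)]
    (hroot : ∃ r : V, ∀ v : V, v ≤ r)
    (hchain : ∀ v : V, IsChain (· ≤ ·) {u : V | v < u})
    (θ : V → ℝ) (hθ : IsSOSP (comparabilityGraph V) θ)
    (A : V) (hA : ∃ j : V, j < A)
    (hchildren : ∀ c : V, c < A → (∀ u : V, u < A → ¬ c < u) → LeafLike θ c) :
    LeafLike θ A :=
  stmt_13_general hchain θ hθ A hchildren
end
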